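/- arXiv:1201.6266 — 6 statements merged into one kernel-verified Lean document; each statement's English description precedes it below -/
import Mathlib

section
/- If a co-event φ is MP and unital, then the intersection of two affirmed events is affirmed: if φ(C)=1 and φ(D)=1, then φ(CD)=1. -/
/-- The implication event `A → B = Ω + A + AB`. -/
def impE {Ω : Type*} (A B : Set Ω) : Set Ω :=
  symmDiff (symmDiff Set.univ A) (A ∩ B)

/-- MP + unital implies the intersection of two affirmed events is affirmed. -/
theorem mp_unital_inter {Ω : Type*} (φ : Set Ω → ZMod 2)
    (hnc : (∃ A : Set Ω, φ A = 1) ∧ (∃ A : Set Ω, φ A = 0))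
    (hmp : ∀ A B : Set Ω, φ (impE A B) = 1 → φ A = 1 → φ B = 1)
    (huni : φ Set.univ = 1) :
    ∀ C D : Set Ω, φ C = 1 → φ D = 1 → φ (C ∩ D) = 1 := by
  intro C D hC hD
  have key : impE C (impE D (C ∩ D)) = Set.univ := by
    ext x
    simp only [impE, Set.mem_symmDiff, Set.mem_inter_iff, Set.mem_univ]
    tauto
  have h1 : φ (impE D (C ∩ D)) = 1 := hmp _ _ (by rw [key]; exact huni) hC
  exact hmp _ _ h1 hD
end

section
/- For a co-event φ the following are equivalent: (i) φ is MP and unital; (ii) φ⁻¹(1) is a proper filter; (iii) φ is multiplicative. -/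
lemma impE_eq {Ω : Type*} (A B : Set Ω) : impE A B = Aᶜ ∪ (A ∩ B) := by
  ext x
  simp [impE, Set.symmDiff_def]
  tauto

/-- MP+unital ↔ `φ⁻¹(1)` is a proper filter ↔ multiplicative. -/
theorem mp_filter_mult_equiv {Ω : Type*} (φ : Set Ω → ZMod 2)
    (hnc : (∃ A : Set Ω, φ A = 1) ∧ (∃ A : Set Ω, φ A = 0)) :
    (((∀ A B : Set Ω, φ (impE A B) = 1 → φ A = 1 → φ B = 1) ∧ φ Set.univ = 1) ↔
      ((∃ A : Set Ω, φ A = 1) ∧ (∃ A : Set Ω, φ A ≠ 1) ∧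
        (∀ A B : Set Ω, φ A = 1 → A ⊆ B → φ B = 1) ∧
        (∀ A B : Set Ω, φ A = 1 → φ B = 1 → φ (A ∩ B) = 1))) ∧
    (((∃ A : Set Ω, φ A = 1) ∧ (∃ A : Set Ω, φ A ≠ 1) ∧
        (∀ A B : Set Ω, φ A = 1 → A ⊆ B → φ B = 1) ∧
        (∀ A B : Set Ω, φ A = 1 → φ B = 1 → φ (A ∩ B) = 1)) ↔
      (∀ A B : Set Ω, φ (A ∩ B) = φ A * φ B)) := by
  have htwo : ∀ a : ZMod 2, a = 0 ∨ a = 1 := by decide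
  -- (i) → (ii)
  have h12 : (∀ A B : Set Ω, φ (impE A B) = 1 → φ A = 1 → φ B = 1) ∧ φ Set.univ = 1 →
      ((∃ A : Set Ω, φ A = 1) ∧ (∃ A : Set Ω, φ A ≠ 1) ∧
        (∀ A B : Set Ω, φ A = 1 → A ⊆ B → φ B = 1) ∧
        (∀ A B : Set Ω, φ A = 1 → φ B = 1 → φ (A ∩ B) = 1)) := by
    rintro ⟨hmp, hu⟩
    obtain ⟨Z, hZ⟩ := hnc.2
    refine ⟨⟨Set.univ, hu⟩, ⟨Z, by simp [hZ]⟩, ?_, ?_⟩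
    · intro A B hA hAB
      apply hmp A B _ hA
      have : impE A B = Set.univ := by
        rw [impE_eq]
        have : A ∩ B = A := Set.inter_eq_self_of_subset_left hAB
        rw [this]
        simp
      rw [this]; exact hu
    · intro A B hA hB
      have hC : φ (Bᶜ ∪ (A ∩ B)) = 1 := by
        apply hmp A _ _ hA
        have : impE A (Bᶜ ∪ (A ∩ B)) = Set.univ := by
          rw [impE_eq]
          ext x
          simp
          tauto
        rw [this]; exact hu
      apply hmp B _ _ hB
      have : impE B (A ∩ B) = Bᶜ ∪ (A ∩ B) := by
        rw [impE_eq]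
        ext x; simp; tauto
      rw [this]; exact hC
  -- (ii) → (iii)
  have h23 : ((∃ A : Set Ω, φ A = 1) ∧ (∃ A : Set Ω, φ A ≠ 1) ∧
        (∀ A B : Set Ω, φ A = 1 → A ⊆ B → φ B = 1) ∧
        (∀ A B : Set Ω, φ A = 1 → φ B = 1 → φ (A ∩ B) = 1)) →
      ∀ A B : Set Ω, φ (A ∩ B) = φ A * φ B := by
    rintro ⟨-, -, hup, hint⟩ A B
    rcases htwo (φ A) with hA | hA
    · rw [hA, zero_mul]
      rcases htwo (φ (A ∩ B)) with h | h
      · exact h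
      · exact absurd (hup _ _ h Set.inter_subset_left) (by rw [hA]; decide)
    · rcases htwo (φ B) with hB | hB
      · rw [hB, mul_zero]
        rcases htwo (φ (A ∩ B)) with h | h
        · exact h
        · exact absurd (hup _ _ h Set.inter_subset_right) (by rw [hB]; decide)
      · rw [hA, hB, one_mul]; exact hint A B hA hB
  -- (iii) → (i)
  have h31 : (∀ A B : Set Ω, φ (A ∩ B) = φ A * φ B) →
      (∀ A B : Set Ω, φ (impE A B) = 1 → φ A = 1 → φ B = 1) ∧ φ Set.univ = 1 := by
    intro hm
    obtain ⟨W, hW⟩ := hnc.1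
    have hu : φ Set.univ = 1 := by
      have := hm W Set.univ
      rw [Set.inter_univ, hW, one_mul] at this
      exact this.symm
    refine ⟨?_, hu⟩
    intro A B hi hA
    have h1 : φ (A ∩ B) = 1 := by
      have : A ∩ impE A B = A ∩ B := by
        rw [impE_eq]; ext x; simp; tauto
      have h := hm A (impE A B)
      rw [this, hA, hi, one_mul] at h
      exact h
    have h2 := hm (A ∩ B) B
    rw [Set.inter_assoc, Set.inter_self, h1, one_mul] at h2
    exact h2.symm
  exact ⟨⟨h12, fun h => h31 (h23 h)⟩, ⟨h23, fun h => h12 (h31 h)⟩⟩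
end

section
/- There exists a zero-preserving co-event satisfying MP that is not multiplicative: on the four-element event algebra over a two-element set Ω = {a,b}, with A = {a}, the map φ with φ(∅)=φ({b})=φ(Ω)=0 and φ({a})=1 satisfies MP and φ(∅)=0, but is not multiplicative since φ({a}∩Ω) ≠ φ({a})φ(Ω). -/
/-- a zero-preserving MP co-event need not be multiplicative: on the
four-element event algebra over `Ω = {a,b}` (here `Bool`, with `A = {true}`). -/
theorem zero_mp_not_multiplicative :
    ∃ φ : Set Bool → ZMod 2,
      ((∃ A : Set Bool, φ A = 1) ∧ (∃ A : Set Bool, φ A = 0)) ∧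
      φ ∅ = 0 ∧ φ {false} = 0 ∧ φ Set.univ = 0 ∧ φ {true} = 1 ∧
      (∀ A B : Set Bool, φ (impE A B) = 1 → φ A = 1 → φ B = 1) ∧
      φ (({true} : Set Bool) ∩ Set.univ) ≠ φ ({true} : Set Bool) * φ (Set.univ : Set Bool) := by
  classical
  refine ⟨fun A => if true ∈ A ∧ false ∉ A then 1 else 0, ⟨⟨{true}, ?_⟩, ⟨∅, ?_⟩⟩,
    ?_, ?_, ?_, ?_, ?_, ?_⟩ <;> simp
  · intro A B h hA htA hfA
    exact absurd (by simp [impE, Set.mem_symmDiff, hfA] : false ∈ impE A B) hA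
end

section
/- If a co-event φ is unital, MP, and satisfies C2 (φ(A)=0 implies φ(Ω\A)=1), then φ is a homomorphism: φ is both multiplicative and additive (φ(A+B)=φ(A)+φ(B) with + symmetric difference on events and addition in Z₂). -/
/-- unital + MP + C2 implies homomorphism. -/
theorem unital_mp_C2_hom {Ω : Type*} (φ : Set Ω → ZMod 2)
    (hnc : (∃ A : Set Ω, φ A = 1) ∧ (∃ A : Set Ω, φ A = 0))
    (huni : φ Set.univ = 1)
    (hmp : ∀ A B : Set Ω, φ (impE A B) = 1 → φ A = 1 → φ B = 1)
    (hc2 : ∀ A : Set Ω, φ A = 0 → φ (Set.univ \ A) = 1) :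
    (∀ A B : Set Ω, φ (A ∩ B) = φ A * φ B) ∧
      (∀ A B : Set Ω, φ (symmDiff A B) = φ A + φ B) := by
  have hzm : ∀ x : ZMod 2, x = 0 ∨ x = 1 := by decide
  have himp : ∀ A B : Set Ω, impE A B = (A \ B)ᶜ := by
    intro A B
    ext x
    simp only [impE, Set.mem_symmDiff, Set.mem_univ, Set.mem_inter_iff, Set.mem_compl_iff,
      Set.mem_diff]
    tauto
  have mono : ∀ A B : Set Ω, A ⊆ B → φ A = 1 → φ B = 1 := by
    intro A B hAB hA
    apply hmp A B _ hA
    rw [himp, Set.diff_eq_empty.mpr hAB, Set.compl_empty]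
    exact huni
  have hempty : φ (∅ : Set Ω) = 0 := by
    rcases hzm (φ ∅) with h | h
    · exact h
    · obtain ⟨A0, hA0⟩ := hnc.2
      have := mono ∅ A0 (Set.empty_subset _) h
      rw [hA0] at this
      exact absurd this (by decide)
  have hcompl : ∀ A : Set Ω, φ A = 0 ↔ φ Aᶜ = 1 := by
    intro A
    constructor
    · intro h
      have := hc2 A h
      rwa [Set.diff_eq, Set.univ_inter] at this
    · intro h
      rcases hzm (φ A) with h0 | h1
      · exact h0
      · have h2 := hmp A ∅ (by rw [himp, Set.diff_empty]; exact h) h1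
        rw [hempty] at h2
        exact absurd h2 (by decide)
  have hone : ∀ A : Set Ω, φ A = 1 → φ Aᶜ = 0 := by
    intro A h
    rcases hzm (φ Aᶜ) with h0 | h1
    · exact h0
    · have := (hcompl A).mpr h1
      rw [h] at this
      exact absurd this (by decide)
  have hmult : ∀ A B : Set Ω, φ (A ∩ B) = φ A * φ B := by
    intro A B
    have hzero : (φ A = 0 ∨ φ B = 0) → φ (A ∩ B) = 0 := by
      intro h
      rcases hzm (φ (A ∩ B)) with h0 | h1
      · exact h0
      · rcases h with h | h
        · have := mono (A ∩ B) A Set.inter_subset_left h1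
          rw [h] at this; exact absurd this (by decide)
        · have := mono (A ∩ B) B Set.inter_subset_right h1
          rw [h] at this; exact absurd this (by decide)
    rcases hzm (φ A) with hA | hA
    · rw [hzero (Or.inl hA), hA, zero_mul]
    · rcases hzm (φ B) with hB | hB
      · rw [hzero (Or.inr hB), hB, mul_zero]
      · rw [hA, hB, one_mul]
        apply hmp A (A ∩ B) _ hA
        rw [himp]
        have hd : A \ (A ∩ B) = A \ B := by
          ext x; simp only [Set.mem_diff, Set.mem_inter_iff]; tauto
        rw [hd]
        exact mono B (A \ B)ᶜ (fun x hx => by simp [hx]) hB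
  refine ⟨hmult, ?_⟩
  intro A B
  have hsub1 : symmDiff A B ⊆ (A ∩ B)ᶜ := by
    intro x hx
    simp only [Set.mem_symmDiff] at hx
    simp only [Set.mem_compl_iff, Set.mem_inter_iff]
    tauto
  have hsub2 : symmDiff A B ⊆ A ∪ B := by
    intro x hx
    simp only [Set.mem_symmDiff] at hx
    simp only [Set.mem_union]
    tauto
  have hsub3 : ∀ X Y : Set Ω, X ∩ Yᶜ ⊆ symmDiff X Y := by
    intro X Y x hx
    simp only [Set.mem_inter_iff, Set.mem_compl_iff] at hx
    simp only [Set.mem_symmDiff]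
    tauto
  rcases hzm (φ A) with hA | hA <;> rcases hzm (φ B) with hB | hB
  · -- both 0
    rw [hA, hB]
    rcases hzm (φ (symmDiff A B)) with h0 | h1
    · rw [h0]; decide
    · exfalso
      have hcc : φ (Aᶜ ∩ Bᶜ) = 1 := by
        rw [hmult, (hcompl A).mp hA, (hcompl B).mp hB, one_mul]
      rw [← Set.compl_union] at hcc
      have := mono _ _ hsub2 h1
      have h0 := (hcompl (A ∪ B)).mpr hcc
      rw [this] at h0
      exact absurd h0 (by decide)
  · -- A = 0, B = 1
    rw [hA, hB]
    have h1 : φ (B ∩ Aᶜ) = 1 := by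
      rw [hmult, hB, (hcompl A).mp hA, one_mul]
    have := mono _ _ (hsub3 B A) h1
    rw [symmDiff_comm] at this
    rw [this]; decide
  · -- A = 1, B = 0
    rw [hA, hB]
    have h1 : φ (A ∩ Bᶜ) = 1 := by
      rw [hmult, hA, (hcompl B).mp hB, one_mul]
    rw [mono _ _ (hsub3 A B) h1]; decide
  · -- both 1
    rw [hA, hB]
    rcases hzm (φ (symmDiff A B)) with h0 | h1
    · rw [h0]; decide
    · exfalso
      have hab : φ (A ∩ B) = 1 := by rw [hmult, hA, hB, one_mul]
      have := mono _ _ hsub1 h1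
      have h0 := hone _ hab
      rw [this] at h0
      exact absurd h0 (by decide)
end

section
/- If a co-event φ is zero-preserving (φ(∅)=0), MP, and satisfies C2, then φ is a homomorphism (multiplicative and additive). -/
/-- zero-preserving + MP + C2 implies homomorphism. -/
theorem zero_mp_C2_hom {Ω : Type*} (φ : Set Ω → ZMod 2)
    (hnc : (∃ A : Set Ω, φ A = 1) ∧ (∃ A : Set Ω, φ A = 0))
    (hzero : φ ∅ = 0)
    (hmp : ∀ A B : Set Ω, φ (impE A B) = 1 → φ A = 1 → φ B = 1)
    (hc2 : ∀ A : Set Ω, φ A = 0 → φ (Set.univ \ A) = 1) :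
    (∀ A B : Set Ω, φ (A ∩ B) = φ A * φ B) ∧
      (∀ A B : Set Ω, φ (symmDiff A B) = φ A + φ B) := by
  have h01 : ∀ x : ZMod 2, x = 0 ∨ x = 1 := by decide
  -- complement: φ A = 0 → φ Aᶜ = 1
  have hcompl : ∀ A : Set Ω, φ A = 0 → φ Aᶜ = 1 := by
    intro A hA
    have := hc2 A hA
    rwa [← Set.compl_eq_univ_diff] at this
  -- φ univ = 1
  have huniv : φ Set.univ = 1 := by
    have := hcompl ∅ hzero
    simpa using this
  -- monotonicity
  have hmono : ∀ A B : Set Ω, A ⊆ B → φ A = 1 → φ B = 1 := by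
    intro A B hAB hA
    apply hmp A B _ hA
    rw [impE_eq]
    have : Aᶜ ∪ (A ∩ B) = Set.univ := by
      rw [Set.inter_eq_left.mpr hAB, Set.compl_union_self]
    rw [this]; exact huniv
  -- φ A = 1 → φ Aᶜ = 0
  have hcompl' : ∀ A : Set Ω, φ A = 1 → φ Aᶜ = 0 := by
    intro A hA
    rcases h01 (φ Aᶜ) with h | h
    · exact h
    · exfalso
      have hφ : φ (impE A ∅) = 1 := by
        rw [impE_eq]; simpa using h
      have := hmp A ∅ hφ hA
      rw [hzero] at this
      exact one_ne_zero this.symm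
  -- multiplicativity (the 1,1 case)
  have hmul1 : ∀ A B : Set Ω, φ A = 1 → φ B = 1 → φ (A ∩ B) = 1 := by
    intro A B hA hB
    apply hmp B (A ∩ B) _ hB
    rw [impE_eq]
    apply hmono A _ _ hA
    intro x hx
    by_cases hxB : x ∈ B
    · exact Or.inr ⟨hxB, hx, hxB⟩
    · exact Or.inl hxB
  -- if φ (A) = 0 then φ of any subset is 0
  have hmono0 : ∀ A B : Set Ω, A ⊆ B → φ B = 0 → φ A = 0 := by
    intro A B hAB hB
    rcases h01 (φ A) with h | h
    · exact h
    · exact absurd (hmono A B hAB h) (by rw [hB]; exact zero_ne_one)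
  -- φ Aᶜ = 1 → φ A = 0
  have hcompl2 : ∀ A : Set Ω, φ Aᶜ = 1 → φ A = 0 := by
    intro A hA
    rcases h01 (φ A) with h | h
    · exact h
    · exfalso
      have := hmul1 A Aᶜ h hA
      rw [Set.inter_compl_self, hzero] at this
      exact zero_ne_one this
  constructor
  · intro A B
    rcases h01 (φ A) with hA | hA
    · rw [hA, zero_mul]
      exact hmono0 _ A Set.inter_subset_left hA
    · rcases h01 (φ B) with hB | hB
      · rw [hA, hB, mul_zero]
        exact hmono0 _ B Set.inter_subset_right hB
      · rw [hA, hB, one_mul]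
        exact hmul1 A B hA hB
  · intro A B
    rcases h01 (φ A) with hA | hA <;> rcases h01 (φ B) with hB | hB
    · -- both 0
      rw [hA, hB, add_zero]
      apply hcompl2
      have h1 := hmul1 Aᶜ Bᶜ (hcompl A hA) (hcompl B hB)
      apply hmono _ _ _ h1
      intro x hx
      simp only [Set.mem_compl_iff, Set.mem_inter_iff, Set.mem_symmDiff] at *
      tauto
    · rw [hA, hB, zero_add]
      have h1 := hmul1 Aᶜ B (hcompl A hA) hB
      apply hmono _ _ _ h1
      intro x hx
      simp only [Set.mem_compl_iff, Set.mem_inter_iff, Set.mem_symmDiff] at *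
      tauto
    · rw [hA, hB, add_zero]
      have h1 := hmul1 A Bᶜ hA (hcompl B hB)
      apply hmono _ _ _ h1
      intro x hx
      simp only [Set.mem_compl_iff, Set.mem_inter_iff, Set.mem_symmDiff] at *
      tauto
    · rw [hA, hB]
      have : (1 : ZMod 2) + 1 = 0 := by decide
      rw [this]
      apply hcompl2
      have h1 := hmul1 A B hA hB
      apply hmono _ _ _ h1
      intro x hx
      simp only [Set.mem_compl_iff, Set.mem_inter_iff, Set.mem_symmDiff] at *
      tauto
end

section
/- Let Ω be finite with a measure-zero predicate Null on events (a set of 'null' events). Call an event stymied if it is contained in some null event, and a multiplicative co-event preclusive if it assigns 0 to every null event. Then the map φ ↦ F(φ) is an order-reversing bijection between minimal preclusive multiplicative co-events (in the order φ₁ ≼ φ₂ iff φ₂(A)=1 ⇒ φ₁(A)=1) and minimal (under inclusion) nonempty non-stymied events. -/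
/-- A co-event: nonconstant map to `ℤ₂`. -/
def IsCoevent {Ω : Type*} (φ : Set Ω → ZMod 2) : Prop :=
  (∃ A : Set Ω, φ A = 1) ∧ (∃ A : Set Ω, φ A = 0)

/-- Multiplicativity. -/
def Multv {Ω : Type*} (φ : Set Ω → ZMod 2) : Prop :=
  ∀ A B : Set Ω, φ (A ∩ B) = φ A * φ B

/-- Preclusivity w.r.t. a collection `N` of null events. -/
def Preclusive {Ω : Type*} (N : Set (Set Ω)) (φ : Set Ω → ZMod 2) : Prop :=
  ∀ A ∈ N, φ A = 0

/-- Minimal preclusive multiplicative co-event in the order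
`φ₁ ≼ φ₂ ↔ (φ₂ A = 1 → φ₁ A = 1)`. -/
def MinPMC {Ω : Type*} (N : Set (Set Ω)) (φ : Set Ω → ZMod 2) : Prop :=
  IsCoevent φ ∧ Multv φ ∧ Preclusive N φ ∧
    ∀ ψ : Set Ω → ZMod 2, IsCoevent ψ → Multv ψ → Preclusive N ψ →
      (∀ A : Set Ω, φ A = 1 → ψ A = 1) → (∀ A : Set Ω, ψ A = 1 → φ A = 1)

/-- Stymied: contained in some null event. -/
def Stymied {Ω : Type*} (N : Set (Set Ω)) (E : Set Ω) : Prop :=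
  ∃ B ∈ N, E ⊆ B

/-- Minimal nonempty non-stymied event. -/
def MinEvent {Ω : Type*} (N : Set (Set Ω)) (E : Set Ω) : Prop :=
  E.Nonempty ∧ ¬ Stymied N E ∧
    ∀ E' : Set Ω, E' ⊆ E → E'.Nonempty → ¬ Stymied N E' → E' = E

section Aux

variable {Ω : Type*}

lemma zmod2_cases (x : ZMod 2) : x = 0 ∨ x = 1 := by revert x; decide

/-- The support of a co-event. -/
def Fsupp (φ : Set Ω → ZMod 2) : Set Ω := ⋂₀ {S : Set Ω | φ S = 1}

open Classical in
/-- The co-event with given support. -/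
noncomputable def cov (E : Set Ω) : Set Ω → ZMod 2 := fun A => if E ⊆ A then 1 else 0

lemma cov_one {E A : Set Ω} (h : E ⊆ A) : cov E A = 1 := by simp [cov, h]
lemma cov_zero {E A : Set Ω} (h : ¬ E ⊆ A) : cov E A = 0 := by simp [cov, h]
lemma cov_eq_one {E A : Set Ω} : cov E A = 1 ↔ E ⊆ A := by
  by_cases h : E ⊆ A <;> simp [cov, h]

lemma phi_univ {φ : Set Ω → ZMod 2} (hc : IsCoevent φ) (hm : Multv φ) :
    φ Set.univ = 1 := by
  obtain ⟨B, hB⟩ := hc.1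
  have := hm B Set.univ
  rw [Set.inter_univ, hB] at this
  rcases zmod2_cases (φ Set.univ) with h | h
  · rw [h, mul_zero] at this; exact absurd this.symm (by decide)
  · exact h

lemma phi_finset {φ : Set Ω → ZMod 2} (hc : IsCoevent φ) (hm : Multv φ)
    (𝒯 : Finset (Set Ω)) (h : ∀ S ∈ 𝒯, φ S = 1) : φ (⋂₀ ↑𝒯) = 1 := by
  classical
  induction 𝒯 using Finset.induction_on with
  | empty => simpa using phi_univ hc hm
  | @insert a s hnotmem ih =>
    rw [Finset.coe_insert, Set.sInter_insert, hm,
      h a (Finset.mem_insert_self a s), ih (fun S hS => h S (Finset.mem_insert_of_mem hS)),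
      one_mul]

lemma phi_Fsupp [Finite Ω] {φ : Set Ω → ZMod 2} (hc : IsCoevent φ) (hm : Multv φ) :
    φ (Fsupp φ) = 1 := by
  have hfin : {S : Set Ω | φ S = 1}.Finite := Set.toFinite _
  have : Fsupp φ = ⋂₀ ↑hfin.toFinset := by rw [Set.Finite.coe_toFinset]; rfl
  rw [this]
  exact phi_finset hc hm _ (fun S hS => (hfin.mem_toFinset.mp hS))

lemma key [Finite Ω] {φ : Set Ω → ZMod 2} (hc : IsCoevent φ) (hm : Multv φ) (A : Set Ω) :
    φ A = 1 ↔ Fsupp φ ⊆ A := by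
  constructor
  · intro h; exact Set.sInter_subset_of_mem h
  · intro h
    have h1 : Fsupp φ ∩ A = Fsupp φ := Set.inter_eq_self_of_subset_left h
    have := hm (Fsupp φ) A
    rw [h1, phi_Fsupp hc hm, one_mul] at this
    exact this.symm

lemma cov_eq [Finite Ω] {φ : Set Ω → ZMod 2} (hc : IsCoevent φ) (hm : Multv φ) :
    cov (Fsupp φ) = φ := by
  funext A
  rcases zmod2_cases (φ A) with h | h
  · rw [h]
    apply cov_zero
    intro hsub
    rw [(key hc hm A).mpr hsub] at h
    exact absurd h (by decide)
  · rw [h]; exact cov_one ((key hc hm A).mp h)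

lemma Fsupp_cov (E : Set Ω) : Fsupp (cov E) = E := by
  apply subset_antisymm
  · exact Set.sInter_subset_of_mem (cov_eq_one.mpr subset_rfl)
  · exact Set.subset_sInter fun S hS => cov_eq_one.mp hS

variable {N : Set (Set Ω)}

lemma cov_coevent {E : Set Ω} (h : E.Nonempty) : IsCoevent (cov E) :=
  ⟨⟨Set.univ, cov_one (Set.subset_univ E)⟩,
   ⟨∅, cov_zero fun hsub => h.ne_empty (Set.subset_empty_iff.mp hsub)⟩⟩

lemma cov_multv (E : Set Ω) : Multv (cov E) := by
  intro A B
  by_cases hA : E ⊆ A <;> by_cases hB : E ⊆ B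
  · rw [cov_one hA, cov_one hB, cov_one (Set.subset_inter hA hB), one_mul]
  · rw [cov_zero hB, cov_zero (fun h => hB (h.trans Set.inter_subset_right)), mul_zero]
  · rw [cov_zero hA, cov_zero (fun h => hA (h.trans Set.inter_subset_left)), zero_mul]
  · rw [cov_zero hA, cov_zero (fun h => hA (h.trans Set.inter_subset_left)), zero_mul]

lemma cov_preclusive {E : Set Ω} (hns : ¬ Stymied N E) : Preclusive N (cov E) := by
  intro A hA
  exact cov_zero fun hsub => hns ⟨A, hA, hsub⟩

lemma Fsupp_nonempty [Finite Ω] {φ : Set Ω → ZMod 2} (hc : IsCoevent φ) (hm : Multv φ)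
    (hp : Preclusive N φ) (hempty : (∅ : Set Ω) ∈ N) : (Fsupp φ).Nonempty := by
  rw [Set.nonempty_iff_ne_empty]
  intro h
  have h1 : φ ∅ = 1 := (key hc hm ∅).mpr (by rw [h])
  rw [hp ∅ hempty] at h1
  exact absurd h1 (by decide)

lemma Fsupp_not_stymied [Finite Ω] {φ : Set Ω → ZMod 2} (hc : IsCoevent φ) (hm : Multv φ)
    (hp : Preclusive N φ) : ¬ Stymied N (Fsupp φ) := by
  rintro ⟨B, hBN, hsub⟩
  have h1 : φ B = 1 := (key hc hm B).mpr hsub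
  rw [hp B hBN] at h1
  exact absurd h1 (by decide)

lemma Fsupp_minEvent [Finite Ω] {φ : Set Ω → ZMod 2} (hφ : MinPMC N φ)
    (hempty : (∅ : Set Ω) ∈ N) : MinEvent N (Fsupp φ) := by
  obtain ⟨hc, hm, hp, hmin⟩ := hφ
  refine ⟨Fsupp_nonempty hc hm hp hempty, Fsupp_not_stymied hc hm hp, ?_⟩
  intro E' hsub hne hns
  have h1 : ∀ A : Set Ω, φ A = 1 → cov E' A = 1 := fun A hA =>
    cov_one (hsub.trans ((key hc hm A).mp hA))
  have h2 := hmin (cov E') (cov_coevent hne) (cov_multv E') (cov_preclusive hns) h1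
  have h3 : φ E' = 1 := h2 E' (cov_one subset_rfl)
  exact subset_antisymm hsub ((key hc hm E').mp h3)

lemma cov_minPMC [Finite Ω] {E : Set Ω} (hE : MinEvent N E)
    (hempty : (∅ : Set Ω) ∈ N) : MinPMC N (cov E) := by
  obtain ⟨hne, hns, hmin⟩ := hE
  refine ⟨cov_coevent hne, cov_multv E, cov_preclusive hns, ?_⟩
  intro ψ hc hm hp h A hA
  have h1 : ψ E = 1 := h E (cov_one subset_rfl)
  have h2 : Fsupp ψ ⊆ E := (key hc hm E).mp h1
  have h3 : Fsupp ψ = E :=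
    hmin _ h2 (Fsupp_nonempty hc hm hp hempty) (Fsupp_not_stymied hc hm hp)
  exact cov_one (h3 ▸ (key hc hm A).mp hA)

end Aux

/-- `φ ↦ F(φ)` is an order-reversing bijection between minimal
preclusive multiplicative co-events and minimal nonempty non-stymied events. -/
theorem minimal_coevents_biject_minimal_events {Ω : Type*} [Fintype Ω]
    (N : Set (Set Ω)) (hdown : ∀ A B : Set Ω, A ⊆ B → B ∈ N → A ∈ N)
    (hempty : (∅ : Set Ω) ∈ N) :
    ∃ e : {φ : Set Ω → ZMod 2 // MinPMC N φ} ≃ {E : Set Ω // MinEvent N E},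
      (∀ φ : {φ : Set Ω → ZMod 2 // MinPMC N φ},
        (e φ : Set Ω) = ⋂₀ {S : Set Ω | φ.1 S = 1}) ∧
      (∀ φ ψ : {φ : Set Ω → ZMod 2 // MinPMC N φ},
        (∀ A : Set Ω, ψ.1 A = 1 → φ.1 A = 1) ↔ (e φ : Set Ω) ⊆ (e ψ : Set Ω)) := by
  refine ⟨⟨fun φ => ⟨Fsupp φ.1, Fsupp_minEvent φ.2 hempty⟩,
          fun E => ⟨cov E.1, cov_minPMC E.2 hempty⟩,
          fun φ => Subtype.ext (cov_eq φ.2.1 φ.2.2.1),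
          fun E => Subtype.ext (Fsupp_cov E.1)⟩, fun φ => rfl, ?_⟩
  intro φ ψ
  constructor
  · intro h
    exact (key φ.2.1 φ.2.2.1 _).mp (h _ (phi_Fsupp ψ.2.1 ψ.2.2.1))
  · intro h A hA
    exact (key φ.2.1 φ.2.2.1 A).mpr (h.trans ((key ψ.2.1 ψ.2.2.1 A).mp hA))
end
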